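/- Let Δ₊ be the semi-simplex category, w : ℕ → Bool, and let J_w be the Grothendieck topology on Δ₊ in which a sieve S on [k] covers if and only if every morphism f : [l] ⟶ [k] with w l = false belongs to S. Let F be a presheaf on Δ₊, G ≤ F a subpresheaf, and Ḡ the J_w-closure of G. Then: (i) if w k = false then Ḡ([k]) = G([k]); (ii) if w 0 = true then Ḡ([0]) = F([0]); and (iii) if k ≥ 1 and w k = true then Ḡ([k]) = { x ∈ F([k]) | for every 0 ≤ i ≤ k, F(δᵢ)(x) ∈ Ḡ([k-1]) }. -/

import Mathlib

open CategoryTheory Simplicial Opposite CategoryTheory.GrothendieckTopology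

universe w

/-- The semi-simplex category: the wide subcategory of `SimplexCategory`
whose morphisms are the monomorphisms. -/
abbrev SemiSimplexCat : Type :=
  WideSubcategory (MorphismProperty.monomorphisms SimplexCategory)

/-- The coface map `δ i : [k] ⟶ [k+1]` as a morphism of the semi-simplex category. -/
def semiδ {k : ℕ} (i : Fin (k + 2)) : (⟨⦋k⦌⟩ : SemiSimplexCat) ⟶ ⟨⦋k + 1⦌⟩ :=
  ⟨SimplexCategory.δ i, inferInstanceAs (Mono (SimplexCategory.δ i))⟩


universe u

/-!
Membership in the `J_w`-closure of `G` only tests the faces of dimension `l` with `w l = false`.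
Such a face of `[k]` is `[k]` itself when `w k = false`; there is none of `[0]` when `w 0 = true`;
and when `w k = true` with `k ≥ 1`, every such face is proper, hence factors through a codimension-one
face `δᵢ`, which reduces the test at `[k]` to the closure at `[k-1]`.
-/

namespace SemiSimplexCat

lemma len_le_of_hom {X Y : SemiSimplexCat} (f : Y ⟶ X) : Y.obj.len ≤ X.obj.len :=
  @SimplexCategory.len_le_of_mono _ _ f.1 f.2

lemma exists_eq_comp_semiδ {k : ℕ} {Y : SemiSimplexCat} (f : Y ⟶ ⟨⦋k + 1⦌⟩)
    (hY : Y.obj.len ≠ k + 1) : ∃ (i : Fin (k + 2)) (g : Y ⟶ ⟨⦋k⦌⟩), f = g ≫ semiδ i := by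
  have hf : ¬ Function.Surjective f.1.toOrderHom := fun hs => by
    have : Epi f.1 := SimplexCategory.epi_iff_surjective.2 hs
    exact hY (le_antisymm (len_le_of_hom f) (SimplexCategory.len_le_of_epi f.1))
  obtain ⟨i, g, hg⟩ := SimplexCategory.eq_comp_δ_of_not_surjective f.1 hf
  have : Mono (g ≫ SimplexCategory.δ i) := hg ▸ f.2
  exact ⟨i, ⟨g, mono_of_mono g (SimplexCategory.δ i)⟩, by ext1; exact hg⟩

/-- The topology `J_w`. -/
def IsDimensionTopology (w : ℕ → Bool) (J : GrothendieckTopology SemiSimplexCat) : Prop :=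
  ∀ (X : SemiSimplexCat) (S : Sieve X),
    S ∈ J X ↔ ∀ (Y : SemiSimplexCat) (f : Y ⟶ X), w Y.obj.len = false → S.arrows f

variable {w : ℕ → Bool} {J : GrothendieckTopology SemiSimplexCat}
  {F : SemiSimplexCatᵒᵖ ⥤ Type u} (G : Subfunctor F)

lemma mem_sheafify_iff (hJ : IsDimensionTopology w J) {X : SemiSimplexCat} (x : F.obj (op X)) :
    x ∈ (G.sheafify J).obj (op X) ↔
      ∀ (Y : SemiSimplexCat) (f : Y ⟶ X), w Y.obj.len = false → F.map f.op x ∈ G.obj (op Y) :=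
  hJ X (G.sieveOfSection x)

lemma sheafify_obj_eq_of_eq_false (hJ : IsDimensionTopology w J) {X : SemiSimplexCat}
    (hX : w X.obj.len = false) : (G.sheafify J).obj (op X) = G.obj (op X) := by
  ext x
  rw [mem_sheafify_iff G hJ]
  refine ⟨fun h => by simpa using h X (𝟙 X) hX, fun hx Y f _ => G.map f.op hx⟩

lemma sheafify_obj_eq_univ_of_forall_le (hJ : IsDimensionTopology w J) {X : SemiSimplexCat}
    (hX : ∀ l ≤ X.obj.len, w l = true) : (G.sheafify J).obj (op X) = Set.univ := by
  refine Set.eq_univ_of_forall fun x => (mem_sheafify_iff G hJ x).2 fun Y f hf => ?_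
  simp [hX _ (len_le_of_hom f)] at hf

lemma sheafify_obj_succ_eq (hJ : IsDimensionTopology w J) {k : ℕ} (hk : w (k + 1) = true) :
    (G.sheafify J).obj (op (⟨⦋k + 1⦌⟩ : SemiSimplexCat)) =
      { x | ∀ i : Fin (k + 2),
        F.map (semiδ i).op x ∈ (G.sheafify J).obj (op (⟨⦋k⦌⟩ : SemiSimplexCat)) } := by
  ext x
  simp only [Set.mem_ofPred_eq, mem_sheafify_iff G hJ]
  constructor
  · intro h i Y g hg
    rw [← Functor.map_comp_apply, ← op_comp]
    exact h Y (g ≫ semiδ i) hg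
  · intro h Y f hf
    have hY : Y.obj.len ≠ k + 1 := fun e => by simp [e, hk] at hf
    obtain ⟨i, g, rfl⟩ := exists_eq_comp_semiδ f hY
    rw [op_comp, Functor.map_comp_apply]
    exact h i Y g hf

end SemiSimplexCat

open SemiSimplexCat in
theorem stmt7 (w : ℕ → Bool) (J : GrothendieckTopology SemiSimplexCat)
    (hJ : ∀ (X : SemiSimplexCat) (S : Sieve X),
      S ∈ J X ↔ ∀ (Y : SemiSimplexCat) (f : Y ⟶ X), w Y.obj.len = false → S.arrows f)
    (F : SemiSimplexCatᵒᵖ ⥤ Type u) (G : Subfunctor F) :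
    (∀ k : ℕ, w k = false →
      (G.sheafify J).obj (op (⟨⦋k⦌⟩ : SemiSimplexCat)) = G.obj (op ⟨⦋k⦌⟩)) ∧
    (w 0 = true →
      (G.sheafify J).obj (op (⟨⦋0⦌⟩ : SemiSimplexCat)) = Set.univ) ∧
    (∀ k : ℕ, w (k + 1) = true →
      (G.sheafify J).obj (op (⟨⦋k + 1⦌⟩ : SemiSimplexCat)) =
        { x | ∀ i : Fin (k + 2),
          F.map (semiδ i).op x ∈ (G.sheafify J).obj (op (⟨⦋k⦌⟩ : SemiSimplexCat)) }) :=
  ⟨fun _ hk => sheafify_obj_eq_of_eq_false G hJ hk,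
    fun h0 => sheafify_obj_eq_univ_of_forall_le G hJ fun l hl => by
      rwa [Nat.le_zero.1 hl],
    fun _ hk => sheafify_obj_succ_eq G hJ hk⟩
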